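/- arXiv:2012.09729 — 7 statements merged into one kernel-verified Lean document; each statement's English description precedes it below -/
import Mathlib

section
/- For every real number v in [0,1] and every positive integer N, the maximum of min_{j∈ℕ}|Nv−j| and min_{j∈ℕ}|(N+1)v−j| is at least (min(v, 1−v))/2. -/
/-!
If `N v` and `(N + 1) v` lie within `d₁` and `d₂` of integers `j` and `k`, then `v` lies within
`d₁ + d₂` of the integer `k - j`; but no integer is closer to `v` than `min v (1 - v)`.
-/

open MeasureTheory Filter Set

/-- Distance from `x` to the nearest nonnegative integer. -/
noncomputable def nnd (x : ℝ) : ℝ := ⨅ j : ℕ, |x - (j : ℝ)|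

lemma min_self_one_sub_le_abs_sub_intCast (v : ℝ) (m : ℤ) : min v (1 - v) ≤ |v - m| := by
  rcases le_or_gt m 0 with hm | hm
  · have hm' : (m : ℝ) ≤ 0 := by exact_mod_cast hm
    exact (min_le_left _ _).trans (le_abs.mpr (Or.inl (by linarith)))
  · have hm' : (1 : ℝ) ≤ m := by exact_mod_cast hm
    exact (min_le_right _ _).trans (le_abs.mpr (Or.inr (by linarith)))

lemma min_self_one_sub_le_nnd_add_nnd (x v : ℝ) : min v (1 - v) ≤ nnd x + nnd (x + v) := by
  have hjk (j k : ℕ) : min v (1 - v) ≤ |x - j| + |x + v - k| :=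
    calc min v (1 - v) ≤ |v - ((k - j : ℤ) : ℝ)| := min_self_one_sub_le_abs_sub_intCast v _
      _ = |(x + v - k) - (x - j)| := by push_cast; ring_nf
      _ ≤ |x + v - k| + |x - j| := abs_sub _ _
      _ = |x - j| + |x + v - k| := add_comm _ _
  have hj (j : ℕ) : min v (1 - v) - |x - j| ≤ nnd (x + v) :=
    le_ciInf fun k => by linarith [hjk j k]
  have : min v (1 - v) - nnd (x + v) ≤ nnd x := le_ciInf fun j => by linarith [hj j]
  linarith

theorem stmt0_general (v : ℝ) (N : ℕ) :
    min v (1 - v) / 2 ≤ max (nnd ((N : ℝ) * v)) (nnd (((N : ℝ) + 1) * v)) := by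
  have h := min_self_one_sub_le_nnd_add_nnd ((N : ℝ) * v) v
  rw [show (N : ℝ) * v + v = ((N : ℝ) + 1) * v by ring] at h
  linarith [le_max_left (nnd ((N : ℝ) * v)) (nnd (((N : ℝ) + 1) * v)),
    le_max_right (nnd ((N : ℝ) * v)) (nnd (((N : ℝ) + 1) * v))]

theorem stmt0 (v : ℝ) (hv : v ∈ Set.Icc (0 : ℝ) 1) (N : ℕ) (hN : 0 < N) :
    min v (1 - v) / 2 ≤ max (nnd ((N : ℝ) * v)) (nnd (((N : ℝ) + 1) * v)) :=
  stmt0_general v N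
end

section
/- For every ρ ≥ 1, every γ > 0, and all nonnegative reals a, b, one has |b^ρ − a^ρ| ≤ γ(ρ−1)(a^ρ + b^ρ) + γ^{1−ρ}|b−a|^ρ. -/
/-!
Convexity of `t ↦ t ^ ρ` (the secant slope is at most the derivative at the right endpoint)
gives `|b ^ ρ - a ^ ρ| ≤ ρ * max a b ^ (ρ - 1) * |b - a|`, and Young's inequality with
exponents `ρ / (ρ - 1)` and `ρ`, balanced by `γ`, splits this product into
`γ * (ρ - 1) * max a b ^ ρ + γ ^ (1 - ρ) * |b - a| ^ ρ`.
-/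

open Real Set

lemma rpow_sub_rpow_le_mul_rpow_sub_one_mul_sub {ρ a b : ℝ} (hρ : 1 ≤ ρ) (ha : 0 ≤ a)
    (hab : a ≤ b) : b ^ ρ - a ^ ρ ≤ ρ * b ^ (ρ - 1) * (b - a) := by
  rcases hab.eq_or_lt with rfl | hab
  · simp
  have hslope := (convexOn_rpow hρ).slope_le_of_hasDerivAt (mem_Ici.2 ha)
    (mem_Ici.2 (ha.trans hab.le)) hab (hasDerivAt_rpow_const (Or.inr hρ))
  rwa [slope_def_field, div_le_iff₀ (sub_pos.2 hab)] at hslope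

lemma abs_rpow_sub_rpow_le {ρ a b : ℝ} (hρ : 1 ≤ ρ) (ha : 0 ≤ a) (hb : 0 ≤ b) :
    |b ^ ρ - a ^ ρ| ≤ ρ * max a b ^ (ρ - 1) * |b - a| := by
  have hρ0 : 0 ≤ ρ := zero_le_one.trans hρ
  rcases le_total a b with hab | hba
  · rw [max_eq_right hab, abs_of_nonneg (sub_nonneg.2 hab),
      abs_of_nonneg (sub_nonneg.2 (rpow_le_rpow ha hab hρ0))]
    exact rpow_sub_rpow_le_mul_rpow_sub_one_mul_sub hρ ha hab
  · rw [max_eq_left hba, abs_sub_comm, abs_sub_comm b, abs_of_nonneg (sub_nonneg.2 hba),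
      abs_of_nonneg (sub_nonneg.2 (rpow_le_rpow hb hba hρ0))]
    exact rpow_sub_rpow_le_mul_rpow_sub_one_mul_sub hρ hb hba

lemma mul_rpow_sub_one_mul_le {ρ γ x y : ℝ} (hρ : 1 ≤ ρ) (hγ : 0 < γ) (hx : 0 ≤ x)
    (hy : 0 ≤ y) : ρ * x ^ (ρ - 1) * y ≤ γ * (ρ - 1) * x ^ ρ + γ ^ (1 - ρ) * y ^ ρ := by
  have hρ0 : 0 < ρ := zero_lt_one.trans_le hρ
  -- Young's inequality as weighted AM-GM; the powers of `γ` cancel in the geometric mean.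
  have hamgm := geom_mean_le_arith_mean2_weighted (w₁ := (ρ - 1) / ρ) (w₂ := 1 / ρ)
    (p₁ := γ * x ^ ρ) (p₂ := γ ^ (1 - ρ) * y ^ ρ) (by have := sub_nonneg.2 hρ; positivity)
    (by positivity) (by positivity) (by positivity) (by field_simp; ring)
  have hgeom :
      (γ * x ^ ρ) ^ ((ρ - 1) / ρ) * (γ ^ (1 - ρ) * y ^ ρ) ^ (1 / ρ) = x ^ (ρ - 1) * y := by
    rw [mul_rpow hγ.le (by positivity), mul_rpow (by positivity) (by positivity),
      ← rpow_mul hx, ← rpow_mul hy, ← rpow_mul hγ.le]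
    have hγρ : 0 < γ ^ ((ρ - 1) / ρ) := rpow_pos_of_pos hγ _
    rw [mul_div_cancel₀ _ hρ0.ne', mul_one_div_cancel hρ0.ne', rpow_one,
      show (1 - ρ) * (1 / ρ) = -((ρ - 1) / ρ) by ring, rpow_neg hγ.le]
    field_simp
  rw [hgeom] at hamgm
  calc ρ * x ^ (ρ - 1) * y = ρ * (x ^ (ρ - 1) * y) := by ring
    _ ≤ ρ * ((ρ - 1) / ρ * (γ * x ^ ρ) + 1 / ρ * (γ ^ (1 - ρ) * y ^ ρ)) := by gcongr
    _ = γ * (ρ - 1) * x ^ ρ + γ ^ (1 - ρ) * y ^ ρ := by field_simp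

theorem stmt3 (ρ γ a b : ℝ) (hρ : 1 ≤ ρ) (hγ : 0 < γ) (ha : 0 ≤ a) (hb : 0 ≤ b) :
    |b ^ ρ - a ^ ρ| ≤ γ * (ρ - 1) * (a ^ ρ + b ^ ρ) + γ ^ (1 - ρ) * |b - a| ^ ρ := by
  have hmax : max a b ^ ρ ≤ a ^ ρ + b ^ ρ := by
    rcases le_total a b with h | h
    · simpa [max_eq_right h] using rpow_nonneg ha ρ
    · simpa [max_eq_left h] using rpow_nonneg hb ρ
  calc |b ^ ρ - a ^ ρ| ≤ ρ * max a b ^ (ρ - 1) * |b - a| := abs_rpow_sub_rpow_le hρ ha hb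
    _ ≤ γ * (ρ - 1) * max a b ^ ρ + γ ^ (1 - ρ) * |b - a| ^ ρ :=
      mul_rpow_sub_one_mul_le hρ hγ (ha.trans (le_max_left a b)) (abs_nonneg _)
    _ ≤ γ * (ρ - 1) * (a ^ ρ + b ^ ρ) + γ ^ (1 - ρ) * |b - a| ^ ρ := by
      have := sub_nonneg.2 hρ
      gcongr
end

section
/- Let μ be a probability measure on ℝ with cdf F. Let (V,Z) be distributed as (uniform on [0,1]) ⊗ μ, independent. Then the random variable F(Z−) + V·μ({Z}) is uniformly distributed on [0,1]. -/
/-!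
Write `F = cdf μ`, `L = F(·−)` and `c z = μ {z} = F z - L z`. For `0 < t < 1` let `a` be the
`t`-quantile, the least `x` with `t ≤ F x`. The probability of `L Z + V c Z < t` splits according
to the position of `Z`: for `Z < a` we have `F Z < t`, so the event holds for every `V`; for
`Z > a` we have `L Z ≥ F a ≥ t`, so it never holds; and the atom `Z = a` contributes
`c a · P(V c a < t - L a) = t - L a`. Summing, `μ (Iio a) + (t - L a) = L a + (t - L a) = t`.
Strict inequalities make the boundary cases disappear, and the values at `0 < t < 1` determine
a probability measure on `ℝ` by monotonicity.
-/

open MeasureTheory ProbabilityTheory Filter Set Function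
open scoped Topology ENNReal

instance isProbabilityMeasure_volume_restrict_Icc :
    IsProbabilityMeasure (volume.restrict (Icc (0 : ℝ) 1)) :=
  ⟨by simp⟩

lemma volume_restrict_Icc_Iio {t : ℝ} (ht : t ∈ Icc (0 : ℝ) 1) :
    volume.restrict (Icc (0 : ℝ) 1) (Iio t) = ENNReal.ofReal t := by
  have hinter : Iio t ∩ Icc 0 1 = Ico 0 t := by
    ext v
    simp only [mem_inter_iff, mem_Iio, mem_Icc, mem_Ico]
    grind
  rw [Measure.restrict_apply measurableSet_Iio, hinter, Real.volume_Ico, sub_zero]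

lemma volume_restrict_Icc_setOf_add_mul_lt_of_add_lt {b c t : ℝ} (hc : 0 ≤ c) (h : b + c < t) :
    volume.restrict (Icc (0 : ℝ) 1) {v | b + v * c < t} = 1 := by
  rw [Measure.restrict_apply' measurableSet_Icc, inter_eq_self_of_subset_right]
  · simp
  · intro v hv
    have : v * c ≤ c := mul_le_of_le_one_left hc hv.2
    simp only [mem_ofPred_eq]
    linarith

lemma volume_restrict_Icc_setOf_add_mul_lt_of_le {b c t : ℝ} (hc : 0 ≤ c) (h : t ≤ b) :
    volume.restrict (Icc (0 : ℝ) 1) {v | b + v * c < t} = 0 := by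
  rw [Measure.restrict_apply' measurableSet_Icc, ← measure_empty (μ := (volume : Measure ℝ))]
  congr 1
  refine eq_empty_of_forall_notMem fun v ⟨hv, hv01⟩ => ?_
  have : 0 ≤ v * c := mul_nonneg hv01.1 hc
  simp only [mem_ofPred_eq] at hv
  linarith

lemma volume_restrict_Icc_setOf_add_mul_lt_mul {b c t : ℝ} (hbt : b ≤ t) (htc : t ≤ b + c) :
    volume.restrict (Icc (0 : ℝ) 1) {v | b + v * c < t} * ENNReal.ofReal c
      = ENNReal.ofReal (t - b) := by
  rcases (show 0 ≤ c by linarith).eq_or_lt with rfl | hc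
  · simp [show t = b by linarith]
  have hset : {v | b + v * c < t} = Iio ((t - b) / c) := by
    ext v
    rw [mem_ofPred_eq, mem_Iio, lt_div_iff₀ hc]
    constructor <;> intro <;> linarith
  rw [hset, volume_restrict_Icc_Iio ⟨by positivity, (div_le_one hc).2 (by linarith)⟩,
    ← ENNReal.ofReal_mul (by positivity), div_mul_cancel₀ _ hc.ne']

namespace MeasureTheory.Measure

lemma ext_of_Iio {ν ρ : Measure ℝ} [IsProbabilityMeasure ν] [IsProbabilityMeasure ρ]
    (h : ∀ t, ν (Iio t) = ρ (Iio t)) : ν = ρ :=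
  ext_of_Ici ν ρ fun t => by
    rw [← compl_Iio, prob_compl_eq_one_sub measurableSet_Iio,
      prob_compl_eq_one_sub measurableSet_Iio, h]

end MeasureTheory.Measure

lemma measure_Iio_eq_zero_of_nonpos {ν : Measure ℝ}
    (hν : ∀ t ∈ Ioo (0 : ℝ) 1, ν (Iio t) = ENNReal.ofReal t) {t : ℝ} (ht : t ≤ 0) :
    ν (Iio t) = 0 := by
  have hlim : Tendsto ENNReal.ofReal (𝓝[>] 0) (𝓝 0) := by
    simpa using (ENNReal.continuous_ofReal.tendsto 0).mono_left nhdsWithin_le_nhds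
  refine le_antisymm (ge_of_tendsto hlim ?_) zero_le
  filter_upwards [Ioo_mem_nhdsGT one_pos] with s hs
  exact (measure_mono (Iio_subset_Iio (ht.trans hs.1.le))).trans (hν s hs).le

lemma measure_Iio_eq_one_of_one_le {ν : Measure ℝ} [IsProbabilityMeasure ν]
    (hν : ∀ t ∈ Ioo (0 : ℝ) 1, ν (Iio t) = ENNReal.ofReal t) {t : ℝ} (ht : 1 ≤ t) :
    ν (Iio t) = 1 := by
  have hlim : Tendsto ENNReal.ofReal (𝓝[<] 1) (𝓝 1) := by
    simpa using (ENNReal.continuous_ofReal.tendsto 1).mono_left nhdsWithin_le_nhds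
  refine le_antisymm prob_le_one (le_of_tendsto hlim ?_)
  filter_upwards [Ioo_mem_nhdsLT one_pos] with s hs
  exact (hν s hs).symm.le.trans (measure_mono (Iio_subset_Iio (hs.2.le.trans ht)))

lemma eq_volume_restrict_Icc_of_measure_Iio {ν : Measure ℝ} [IsProbabilityMeasure ν]
    (hν : ∀ t ∈ Ioo (0 : ℝ) 1, ν (Iio t) = ENNReal.ofReal t) :
    ν = volume.restrict (Icc 0 1) := by
  have hU : ∀ t ∈ Ioo (0 : ℝ) 1, volume.restrict (Icc 0 1) (Iio t) = ENNReal.ofReal t :=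
    fun t ht => volume_restrict_Icc_Iio (Ioo_subset_Icc_self ht)
  refine Measure.ext_of_Iio fun t => ?_
  rcases le_or_gt t 0 with ht0 | ht0
  · rw [measure_Iio_eq_zero_of_nonpos hν ht0, measure_Iio_eq_zero_of_nonpos hU ht0]
  rcases lt_or_ge t 1 with ht1 | ht1
  · rw [hν t ⟨ht0, ht1⟩, hU t ⟨ht0, ht1⟩]
  · rw [measure_Iio_eq_one_of_one_le hU ht1, measure_Iio_eq_one_of_one_le hν ht1]

lemma StieltjesFunction.isLeast_setOf_le {f : StieltjesFunction ℝ} {t : ℝ}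
    (hlow : ∃ x, f x < t) (hhigh : ∃ x, t ≤ f x) :
    IsLeast {x | t ≤ f x} (sInf {x | t ≤ f x}) := by
  obtain ⟨x₀, hx₀⟩ := hlow
  have hbdd : BddBelow {x | t ≤ f x} :=
    ⟨x₀, fun x hx => le_of_lt (f.mono.reflect_lt (hx₀.trans_le hx))⟩
  refine ⟨?_, fun x hx => csInf_le hbdd hx⟩
  refine ge_of_tendsto ((f.right_continuous _).mono Ioi_subset_Ici_self) ?_
  filter_upwards [self_mem_nhdsWithin] with x hx
  obtain ⟨y, hy, hyx⟩ := exists_lt_of_csInf_lt hhigh hx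
  exact (show t ≤ f y from hy).trans (f.mono hyx.le)

section CDF

variable (μ : Measure ℝ)

lemma exists_isLeast_setOf_le_cdf {t : ℝ} (ht : t ∈ Ioo (0 : ℝ) 1) :
    ∃ a, IsLeast {x | t ≤ cdf μ x} a :=
  ⟨_, StieltjesFunction.isLeast_setOf_le
    ((tendsto_cdf_atBot μ).eventually (eventually_lt_nhds ht.1)).exists
    ((tendsto_cdf_atTop μ).eventually (eventually_ge_nhds ht.2)).exists⟩

lemma measure_singleton_toReal_eq_cdf_sub_leftLim [IsProbabilityMeasure μ] (z : ℝ) :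
    (μ {z}).toReal = cdf μ z - leftLim (cdf μ) z := by
  have h := (cdf μ).measure_singleton z
  rw [measure_cdf] at h
  rw [h, ENNReal.toReal_ofReal (sub_nonneg.2 ((cdf μ).mono.leftLim_le le_rfl))]

lemma measure_Iio_eq_ofReal_leftLim_cdf [IsProbabilityMeasure μ] (x : ℝ) :
    μ (Iio x) = ENNReal.ofReal (leftLim (cdf μ) x) := by
  have h := (cdf μ).measure_Iio (tendsto_cdf_atBot μ) x
  rwa [measure_cdf, sub_zero] at h

lemma leftLim_cdf_nonneg (x : ℝ) : 0 ≤ leftLim (cdf μ) x :=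
  (cdf_nonneg μ (x - 1)).trans ((cdf μ).mono.le_leftLim (sub_one_lt x))

end CDF

noncomputable def distributionalTransform (μ : Measure ℝ) (p : ℝ × ℝ) : ℝ :=
  leftLim (cdf μ) p.2 + p.1 * (μ {p.2}).toReal

section DistributionalTransform

variable (μ : Measure ℝ) [IsProbabilityMeasure μ]

lemma measurable_distributionalTransform : Measurable (distributionalTransform μ) := by
  have hL : Measurable (leftLim (cdf μ)) := (cdf μ).mono.leftLim.measurable
  have hc : Measurable fun z => (μ {z}).toReal := by
    simp_rw [measure_singleton_toReal_eq_cdf_sub_leftLim]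
    exact (cdf μ).mono.measurable.sub hL
  exact (hL.comp measurable_snd).add (measurable_fst.mul (hc.comp measurable_snd))

lemma map_distributionalTransform_apply_Iio (t : ℝ) :
    ((volume.restrict (Icc (0 : ℝ) 1)).prod μ).map (distributionalTransform μ) (Iio t)
      = ∫⁻ z, volume.restrict (Icc (0 : ℝ) 1) {v | distributionalTransform μ (v, z) < t} ∂μ := by
  rw [Measure.map_apply (measurable_distributionalTransform μ) measurableSet_Iio,
    Measure.prod_apply_symm (measurable_distributionalTransform μ measurableSet_Iio)]
  rfl

lemma lintegral_volume_restrict_Icc_setOf_distributionalTransform_lt {t : ℝ}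
    (ht : t ∈ Ioo (0 : ℝ) 1) :
    ∫⁻ z, volume.restrict (Icc (0 : ℝ) 1) {v | distributionalTransform μ (v, z) < t} ∂μ
      = ENNReal.ofReal t := by
  set g : ℝ → ℝ≥0∞ := fun z =>
    volume.restrict (Icc (0 : ℝ) 1) {v | distributionalTransform μ (v, z) < t}
  obtain ⟨a, ha, ha_least⟩ := exists_isLeast_setOf_le_cdf μ ht
  have hlt_of_lt : ∀ z < a, cdf μ z < t := fun z hz => not_le.1 fun h => hz.not_ge (ha_least h)
  have hLa : leftLim (cdf μ) a ≤ t := by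
    refine le_of_tendsto ((cdf μ).mono.tendsto_leftLim a) ?_
    filter_upwards [self_mem_nhdsWithin] with z hz using (hlt_of_lt z hz).le
  have hc_nonneg : ∀ z, 0 ≤ (μ {z}).toReal := fun z => ENNReal.toReal_nonneg
  have hg : ∀ z, g z = (Iio a).indicator 1 z + ({a} : Set ℝ).indicator (fun _ => g a) z := by
    intro z
    rcases lt_trichotomy z a with hz | rfl | hz
    · simp only [indicator_of_mem (mem_Iio.2 hz),
        indicator_of_notMem (show z ∉ ({a} : Set ℝ) from hz.ne), Pi.one_apply, add_zero]
      refine volume_restrict_Icc_setOf_add_mul_lt_of_add_lt (b := leftLim (cdf μ) z)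
        (hc_nonneg z) ?_
      rw [measure_singleton_toReal_eq_cdf_sub_leftLim, add_sub_cancel]
      exact hlt_of_lt z hz
    · simp
    · simp only [indicator_of_notMem (show z ∉ Iio a from hz.not_gt),
        indicator_of_notMem (show z ∉ ({a} : Set ℝ) from hz.ne'), add_zero]
      exact volume_restrict_Icc_setOf_add_mul_lt_of_le (b := leftLim (cdf μ) z) (hc_nonneg z)
        (ha.trans ((cdf μ).mono.le_leftLim hz))
  have hga : g a * μ {a} = ENNReal.ofReal (t - leftLim (cdf μ) a) := by
    rw [← ENNReal.ofReal_toReal (measure_ne_top μ {a})]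
    refine volume_restrict_Icc_setOf_add_mul_lt_mul (c := (μ {a}).toReal) hLa ?_
    rwa [measure_singleton_toReal_eq_cdf_sub_leftLim, add_sub_cancel]
  change ∫⁻ z, g z ∂μ = _
  rw [lintegral_congr hg, lintegral_add_left (measurable_one.indicator measurableSet_Iio),
    lintegral_indicator_one measurableSet_Iio,
    lintegral_indicator_const (measurableSet_singleton a), hga, measure_Iio_eq_ofReal_leftLim_cdf,
    ← ENNReal.ofReal_add (leftLim_cdf_nonneg μ a) (sub_nonneg.2 hLa), add_sub_cancel]

end DistributionalTransform

theorem stmt5 (μ : Measure ℝ) [IsProbabilityMeasure μ] :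
    Measure.map
        (fun p : ℝ × ℝ =>
          Function.leftLim (fun x => cdf μ x) p.2 + p.1 * (μ {p.2}).toReal)
        ((volume.restrict (Set.Icc (0 : ℝ) 1)).prod μ)
      = volume.restrict (Set.Icc (0 : ℝ) 1) := by
  change ((volume.restrict (Icc (0 : ℝ) 1)).prod μ).map (distributionalTransform μ) = _
  have := Measure.isProbabilityMeasure_map (μ := (volume.restrict (Icc (0 : ℝ) 1)).prod μ)
    (measurable_distributionalTransform μ).aemeasurable
  refine eq_volume_restrict_Icc_of_measure_Iio fun t ht => ?_
  rw [map_distributionalTransform_apply_Iio,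
    lintegral_volume_restrict_Icc_setOf_distributionalTransform_lt μ ht]
end

section
/- Let μ be a probability measure on ℝ with finite moment of order ρ ≥ 1, let F be its cdf, f the density of the absolutely continuous part of μ, and A a Borel set with μ_sing(A)=0 and ℝ∖A Lebesgue-null. Then for all 0 < u < w < 1: F^{-1}(w) − F^{-1}(u) = ∫_u^w 1_A(F^{-1}(v))/f(F^{-1}(v)) dv + λ({x : u ≤ F(x) < w, f(x) = 0}), where λ is Lebesgue measure. -/
/-!
The quantile function `qf μ` pushes Lebesgue measure on `(0, 1)` forward to `μ`. Restricting to
`(u, w]` turns `∫_u^w g (qf μ v) dv` into `∫_{(qf μ u, qf μ w)} g dμ`; the only other mass lands on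
the endpoints `qf μ u`, `qf μ w`, and only when they are atoms of `μ`, where `g = 1_A / f`
vanishes because atoms lie outside `A`. On `A` the measure `μ` is `f · λ`, so the integral is the
Lebesgue measure of `{f ≠ 0}` inside `(qf μ u, qf μ w)` (Lean's `0⁻¹ = 0` makes `f · f⁻¹` the
indicator of `{f ≠ 0}`), and `{u ≤ F < w, f = 0}` is the rest of `[qf μ u, qf μ w)`.
-/

open MeasureTheory ProbabilityTheory Filter Set Function
open scoped ENNReal

/-- Left-continuous quantile function of `μ`. -/
noncomputable def qf (μ : Measure ℝ) (u : ℝ) : ℝ := sInf {x : ℝ | u ≤ cdf μ x}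

section

variable {α : Type*} [MeasurableSpace α]

lemma ae_mem_imp_measure_singleton_ne_zero {ν : Measure α} {s : Set α} (hs : s.Countable) :
    ∀ᵐ y ∂ν, y ∈ s → ν {y} ≠ 0 := by
  have h : ν (⋃ y ∈ {y ∈ s | ν {y} = 0}, {y}) = 0 :=
    (measure_biUnion_null_iff (hs.mono (sep_subset _ _))).2 fun _ hy => hy.2
  rw [biUnion_of_singleton] at h
  filter_upwards [measure_eq_zero_iff_ae_notMem.1 h] with y hy hys h0 using hy ⟨hys, h0⟩

lemma restrict_absolutelyContinuous_of_singularPart_eq_zero {μ ν : Measure α}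
    [μ.HaveLebesgueDecomposition ν] {A : Set α} (hA : μ.singularPart ν A = 0) :
    μ.restrict A ≪ ν := by
  rw [μ.haveLebesgueDecomposition_add ν, Measure.restrict_add, Measure.restrict_eq_zero.2 hA,
    zero_add]
  exact Measure.restrict_le_self.absolutelyContinuous.trans (withDensity_absolutelyContinuous _ _)

lemma measure_singleton_eq_zero_of_singularPart_eq_zero {μ ν : Measure α} [NullSingletonClass ν]
    [μ.HaveLebesgueDecomposition ν] {A : Set α} (hA : μ.singularPart ν A = 0) {x : α}
    (hx : x ∈ A) : μ {x} = 0 := by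
  refine le_antisymm ?_ zero_le
  calc μ {x} = μ ({x} ∩ A) := by rw [singleton_inter_of_mem hx]
    _ ≤ μ.restrict A {x} := Measure.le_restrict_apply _ _
    _ = 0 := restrict_absolutelyContinuous_of_singularPart_eq_zero hA (measure_singleton x)

lemma setLIntegral_indicator_inv_density {μ ν m : Measure α} {f : α → ℝ}
    (hf0 : ∀ x, 0 ≤ f x) (hf : Measurable f)
    (hμ : μ = ν + m.withDensity (fun x => ENNReal.ofReal (f x)))
    {A s : Set α} (hA : MeasurableSet A) (hνA : ν A = 0) (hAc : m Aᶜ = 0)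
    (hs : MeasurableSet s) :
    ∫⁻ x in s, ENNReal.ofReal (A.indicator (fun y => (f y)⁻¹) x) ∂μ =
      m (s ∩ {x | f x ≠ 0}) := by
  have hf_ne : MeasurableSet {x | f x ≠ 0} := (measurableSet_singleton 0).preimage hf |>.compl
  have hpt : ∀ x,
      ENNReal.ofReal (f x) * ENNReal.ofReal (f x)⁻¹ = {x | f x ≠ 0}.indicator 1 x := by
    intro x
    by_cases hx : f x = 0
    · simp [hx]
    · rw [← ENNReal.ofReal_mul (hf0 x), mul_inv_cancel₀ hx]
      simp [hx]
  calc ∫⁻ x in s, ENNReal.ofReal (A.indicator (fun y => (f y)⁻¹) x) ∂μ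
      = ∫⁻ x in A ∩ s, ENNReal.ofReal (f x)⁻¹ ∂μ := by
        rw [← setLIntegral_indicator hA]
        exact lintegral_congr fun x => by by_cases hx : x ∈ A <;> simp [hx]
    _ = ∫⁻ x in A ∩ s, ENNReal.ofReal (f x)⁻¹
          ∂(m.withDensity fun x => ENNReal.ofReal (f x)) := by
        rw [hμ, Measure.restrict_add,
          Measure.restrict_eq_zero.2 (measure_mono_null inter_subset_left hνA), zero_add]
    _ = ∫⁻ x in A ∩ s, {x | f x ≠ 0}.indicator 1 x ∂m := by
        rw [setLIntegral_withDensity_eq_setLIntegral_mul _ hf.ennreal_ofReal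
          (by fun_prop) (hA.inter hs)]
        simp only [Pi.mul_apply, hpt]
    _ = m (s ∩ {x | f x ≠ 0}) := by
        rw [lintegral_indicator_one hf_ne, Measure.restrict_apply hf_ne, inter_comm,
          inter_assoc, inter_comm, measure_inter_conull hAc]

end

section Quantile

variable {μ : Measure ℝ} {u v w x : ℝ}

lemma bddBelow_setOf_le_cdf (hv : 0 < v) : BddBelow {x | v ≤ cdf μ x} := by
  obtain ⟨x₀, hx₀⟩ := ((tendsto_cdf_atBot μ).eventually (eventually_lt_nhds hv)).exists
  exact ⟨x₀, fun y hy => le_of_not_gt fun hlt =>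
    (hy.trans_lt (monotone_cdf μ hlt.le |>.trans_lt hx₀)).false⟩

lemma nonempty_setOf_le_cdf (hv : v < 1) : {x | v ≤ cdf μ x}.Nonempty :=
  ((tendsto_cdf_atTop μ).eventually (eventually_ge_nhds hv)).exists

lemma le_cdf_qf (hv : v < 1) : v ≤ cdf μ (qf μ v) := by
  refine ge_of_tendsto ((cdf μ).right_continuous (qf μ v)
    |>.mono_left (nhdsWithin_mono _ Ioi_subset_Ici_self)) ?_
  filter_upwards [self_mem_nhdsWithin] with y hy
  obtain ⟨x, hxS, hxy⟩ := exists_lt_of_csInf_lt (nonempty_setOf_le_cdf hv) hy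
  exact hxS.trans (monotone_cdf μ hxy.le)

lemma qf_le_iff (h0 : 0 < v) (h1 : v < 1) : qf μ v ≤ x ↔ v ≤ cdf μ x :=
  ⟨fun h => (le_cdf_qf h1).trans (monotone_cdf μ h),
    fun h => csInf_le (bddBelow_setOf_le_cdf h0) h⟩

lemma monotoneOn_qf : MonotoneOn (qf μ) (Ioo 0 1) := fun _ hs _ ht hst =>
  csInf_le_csInf (bddBelow_setOf_le_cdf hs.1) (nonempty_setOf_le_cdf ht.2) fun _ hx => hst.trans hx

lemma cdf_preimage_Ico (hu : 0 < u) (huv : u ≤ v) (hv : v < 1) :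
    cdf μ ⁻¹' Ico u v = Ico (qf μ u) (qf μ v) := by
  ext x
  simp only [mem_preimage, mem_Ico, ← not_le, qf_le_iff hu (huv.trans_lt hv),
    qf_le_iff (hu.trans_le huv) hv]

lemma aemeasurable_qf : AEMeasurable (qf μ) (volume.restrict (Ioo 0 1)) :=
  aemeasurable_restrict_of_monotoneOn measurableSet_Ioo monotoneOn_qf

theorem map_qf_volume [IsProbabilityMeasure μ] :
    (volume.restrict (Ioo 0 1)).map (qf μ) = μ := by
  refine Measure.ext_of_Iic _ _ fun x => ?_
  rw [Measure.map_apply_of_aemeasurable aemeasurable_qf measurableSet_Iic,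
    Measure.restrict_apply' measurableSet_Ioo, ← ofReal_cdf]
  have hpre : qf μ ⁻¹' Iic x ∩ Ioo 0 1 = Ioo 0 1 ∩ Iic (cdf μ x) := by
    ext v
    simp only [mem_inter_iff, mem_preimage, mem_Iic]
    exact ⟨fun ⟨hx, hv⟩ => ⟨hv, (qf_le_iff hv.1 hv.2).1 hx⟩,
      fun ⟨hv, hx⟩ => ⟨(qf_le_iff hv.1 hv.2).2 hx, hv⟩⟩
  have hae :
      (Ioo 0 1 ∩ Iic (cdf μ x) : Set ℝ) =ᵐ[volume] (Ioc 0 1 ∩ Iic (cdf μ x) : Set ℝ) :=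
    Ioo_ae_eq_Ioc.inter (ae_eq_refl _)
  rw [hpre, measure_congr hae, Ioc_inter_Iic, Real.volume_Ioc,
    min_eq_right (cdf_le_one μ x), sub_zero]

lemma qf_mem_Icc_of_mem_Ioc (hu : 0 < u) (hw : w < 1) (hv : v ∈ Ioc u w) :
    qf μ v ∈ Icc (qf μ u) (qf μ w) := by
  have hv' : v ∈ Ioo 0 1 := ⟨hu.trans hv.1, hv.2.trans_lt hw⟩
  exact ⟨monotoneOn_qf ⟨hu, hv.1.trans hv'.2⟩ hv' hv.1.le,
    monotoneOn_qf hv' ⟨hv'.1.trans_le hv.2, hw⟩ hv.2⟩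

lemma mem_Ioo_of_qf_mem_Ioo (hu : 0 < u) (huw : u ≤ w) (hw : w < 1) (hv : v ∈ Ioo 0 1)
    (hqv : qf μ v ∈ Ioo (qf μ u) (qf μ w)) : v ∈ Ioo u w := by
  refine ⟨lt_of_not_ge fun hvu => ?_, lt_of_not_ge fun hwv => ?_⟩
  · exact absurd hqv.1 (not_lt.2 (monotoneOn_qf hv ⟨hu, huw.trans_lt hw⟩ hvu))
  · exact absurd hqv.2 (not_lt.2 (monotoneOn_qf ⟨hu.trans_le huw, hw⟩ hv hwv))

theorem setLIntegral_comp_qf [IsProbabilityMeasure μ] {G : ℝ → ℝ≥0∞} (hG : Measurable G)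
    (hG_atom : ∀ x, μ {x} ≠ 0 → G x = 0) (hu : 0 < u) (huw : u ≤ w) (hw : w < 1) :
    ∫⁻ v in Ioc u w, G (qf μ v) = ∫⁻ x in Ioo (qf μ u) (qf μ w), G x ∂μ := by
  set a := qf μ u
  set b := qf μ w
  have hatoms : ∀ᵐ v ∂(volume.restrict (Ioo 0 1)), qf μ v ∈ ({a, b} : Set ℝ) →
      μ {qf μ v} ≠ 0 := ae_of_ae_map aemeasurable_qf <| by
    rw [map_qf_volume (μ := μ)]
    exact ae_mem_imp_measure_singleton_ne_zero (toFinite {a, b}).countable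
  calc ∫⁻ v in Ioc u w, G (qf μ v)
      = ∫⁻ v in Ioo 0 1, (Ioc u w).indicator (G ∘ qf μ) v := by
        rw [lintegral_indicator measurableSet_Ioc, Measure.restrict_restrict measurableSet_Ioc,
          inter_eq_left.2 (Ioc_subset_Ioo_right hw |>.trans (Ioo_subset_Ioo_left hu.le))]
        rfl
    _ = ∫⁻ v in Ioo 0 1, (Ioo a b).indicator G (qf μ v) := by
        refine lintegral_congr_ae ?_
        filter_upwards [ae_restrict_mem measurableSet_Ioo, hatoms] with v hv hv_atom
        by_cases hvI : v ∈ Ioc u w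
        · rw [indicator_of_mem hvI, comp_apply]
          by_cases hqv : qf μ v ∈ Ioo a b
          · rw [indicator_of_mem hqv]
          · have hI := qf_mem_Icc_of_mem_Ioc (μ := μ) hu hw hvI
            have hab : qf μ v = a ∨ qf μ v = b := by
              by_contra! h
              exact hqv ⟨lt_of_le_of_ne hI.1 h.1.symm, lt_of_le_of_ne hI.2 h.2⟩
            rw [indicator_of_notMem hqv, hG_atom _ (hv_atom hab)]
        · rw [indicator_of_notMem hvI, indicator_of_notMem
            fun hqv => hvI (Ioo_subset_Ioc_self (mem_Ioo_of_qf_mem_Ioo hu huw hw hv hqv))]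
    _ = ∫⁻ x, (Ioo a b).indicator G x ∂μ := by
        rw [← lintegral_map' (hG.indicator measurableSet_Ioo).aemeasurable aemeasurable_qf,
          map_qf_volume (μ := μ)]
    _ = ∫⁻ x in Ioo a b, G x ∂μ := lintegral_indicator measurableSet_Ioo _

end Quantile

lemma toReal_volume_Ioo_inter_compl_add {a b : ℝ} (hab : a ≤ b) {t : Set ℝ}
    (ht : MeasurableSet t) :
    (volume (Ioo a b ∩ tᶜ)).toReal + (volume (Ico a b ∩ t)).toReal = b - a := by
  have hae : (Ioo a b ∩ tᶜ : Set ℝ) =ᵐ[volume] (Ico a b ∩ tᶜ : Set ℝ) :=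
    Ioo_ae_eq_Ico.inter (ae_eq_refl _)
  have hfin : ∀ s ⊆ Ico a b, volume s ≠ ∞ := fun s hs =>
    ((measure_mono hs).trans_lt measure_Ico_lt_top).ne
  rw [measure_congr hae, add_comm, ← ENNReal.toReal_add (hfin _ inter_subset_left)
    (hfin _ inter_subset_left), ← sdiff_eq, measure_inter_add_sdiff _ ht, Real.volume_Ico,
    ENNReal.toReal_ofReal (sub_nonneg.2 hab)]

theorem stmt8_general (μ : Measure ℝ) [IsProbabilityMeasure μ]
    (f : ℝ → ℝ) (hf0 : ∀ x, 0 ≤ f x) (hfmeas : Measurable f)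
    (hdec : μ = μ.singularPart volume
      + volume.withDensity (fun x => ENNReal.ofReal (f x)))
    (A : Set ℝ) (hA : MeasurableSet A) (hsing : μ.singularPart volume A = 0)
    (hAc : volume Aᶜ = 0)
    (u w : ℝ) (hu : 0 < u) (huw : u < w) (hw : w < 1) :
    qf μ w - qf μ u =
      (∫ v in u..w, Set.indicator A (fun y => (f y)⁻¹) (qf μ v))
      + (volume {x : ℝ | u ≤ cdf μ x ∧ cdf μ x < w ∧ f x = 0}).toReal := by
  set g := A.indicator fun y => (f y)⁻¹
  have hg : Measurable g := hfmeas.inv.indicator hA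
  have hg_atom : ∀ x, μ {x} ≠ 0 → ENNReal.ofReal (g x) = 0 := fun x hx => by
    have hxA : x ∉ A := fun hxA =>
      hx (measure_singleton_eq_zero_of_singularPart_eq_zero hsing hxA)
    simp only [g, indicator_of_notMem hxA, ENNReal.ofReal_zero]
  have h_integral :
      ∫ v in u..w, g (qf μ v) = (∫⁻ v in Ioc u w, ENNReal.ofReal (g (qf μ v))).toReal := by
    have hqf : AEMeasurable (qf μ) (volume.restrict (Ioc u w)) :=
      aemeasurable_qf.mono_measure (Measure.restrict_mono
        (Ioc_subset_Ioo_right hw |>.trans (Ioo_subset_Ioo_left hu.le)) le_rfl)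
    rw [intervalIntegral.integral_of_le huw.le, integral_eq_lintegral_of_nonneg_ae
      (ae_of_all _ fun v => indicator_nonneg (fun y _ => inv_nonneg.2 (hf0 y)) _)
      (hg.comp_aemeasurable hqf).aestronglyMeasurable]
  have hset : {x | u ≤ cdf μ x ∧ cdf μ x < w ∧ f x = 0} =
      Ico (qf μ u) (qf μ w) ∩ {x | f x = 0} := by
    rw [← cdf_preimage_Ico hu huw.le hw]
    ext x
    simp [and_assoc]
  rw [h_integral, setLIntegral_comp_qf hg.ennreal_ofReal hg_atom hu huw.le hw,
    setLIntegral_indicator_inv_density hf0 hfmeas hdec hA hsing hAc measurableSet_Ioo, hset]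
  exact (toReal_volume_Ioo_inter_compl_add (monotoneOn_qf ⟨hu, huw.trans hw⟩
    ⟨hu.trans huw, hw⟩ huw.le) (measurableSet_singleton 0 |>.preimage hfmeas)).symm

theorem stmt8 (μ : Measure ℝ) [IsProbabilityMeasure μ] (ρ : ℝ) (hρ : 1 ≤ ρ)
    (hmom : Integrable (fun x : ℝ => |x| ^ ρ) μ)
    (f : ℝ → ℝ) (hf0 : ∀ x, 0 ≤ f x) (hfmeas : Measurable f)
    (hdec : μ = μ.singularPart volume
      + volume.withDensity (fun x => ENNReal.ofReal (f x)))
    (A : Set ℝ) (hA : MeasurableSet A) (hsing : μ.singularPart volume A = 0)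
    (hAc : volume Aᶜ = 0) (hfA : ∀ x ∉ A, f x = 1)
    (u w : ℝ) (hu : 0 < u) (huw : u < w) (hw : w < 1) :
    qf μ w - qf μ u =
      (∫ v in u..w, Set.indicator A (fun y => (f y)⁻¹) (qf μ v))
      + (volume {x : ℝ | u ≤ cdf μ x ∧ cdf μ x < w ∧ f x = 0}).toReal :=
  stmt8_general μ f hf0 hfmeas hdec A hA hsing hAc u w hu huw hw
end

section
/- Let μ be a probability measure on ℝ, F its cdf, f the density of its absolutely continuous part. If f > 0 Lebesgue-a.e. on {x : 0 < F(x) < 1}, then for all u, w ∈ (0,1): F^{-1}(w) − F^{-1}(u) = ∫_u^w 1_A(F^{-1}(v))/f(F^{-1}(v)) dv, where A is a Borel set carrying the absolutely continuous part (μ_sing(A)=0, ℝ∖A Lebesgue-null) and f = 1 on ℝ∖A. -/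
/-!
For `v ∈ (0, 1)` the quantile function satisfies `qf μ v ≤ x ↔ v ≤ F x`, so it pushes Lebesgue
measure on `(0, 1)` forward to `μ`. Writing `a = qf μ u`, `b = qf μ w`, monotonicity gives
`qf⁻¹ (a, b) ⊆ (u, w] ⊆ qf⁻¹ [a, b]`, hence `∫_(u,w] g (qf v) dv` lies between `∫_(a,b) g dμ` and
`∫_[a,b] g dμ` for `g = 1_A / f`. On `A` the measure `μ` has density `f`, so `∫_S g dμ` is the
Lebesgue measure of `S ∩ A ∩ {f > 0}`. Between `a` and `b` we have `u ≤ F < w`, so `f > 0` a.e.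
there and both bounds equal `b - a`.
-/

open MeasureTheory ProbabilityTheory Filter Set

open scoped ENNReal Topology

namespace ProbabilityTheory

section Quantile

variable {μ : Measure ℝ}

lemma nonempty_setOf_le_cdf {v : ℝ} (hv : v < 1) : {x | v ≤ cdf μ x}.Nonempty :=
  (((tendsto_cdf_atTop μ).eventually (eventually_gt_nhds hv)).exists).imp fun _ => le_of_lt

lemma bddBelow_setOf_le_cdf {v : ℝ} (hv : 0 < v) : BddBelow {x | v ≤ cdf μ x} := by
  obtain ⟨x₀, hx₀⟩ := ((tendsto_cdf_atBot μ).eventually (eventually_lt_nhds hv)).exists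
  exact ⟨x₀, fun x hx => le_of_not_gt fun hlt => (hx.trans (monotone_cdf μ hlt.le)).not_gt hx₀⟩

lemma le_cdf_qf {v : ℝ} (hv : v < 1) : v ≤ cdf μ (qf μ v) := by
  have hright : Tendsto (cdf μ) (𝓝[>] (qf μ v)) (𝓝 (cdf μ (qf μ v))) :=
    ((cdf μ).right_continuous _).mono Ioi_subset_Ici_self
  refine ge_of_tendsto hright (eventually_nhdsWithin_of_forall fun x hx => ?_)
  obtain ⟨y, hy, hyx⟩ := exists_lt_of_csInf_lt (nonempty_setOf_le_cdf hv) hx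
  exact hy.trans (monotone_cdf μ hyx.le)

lemma qf_le_iff {v x : ℝ} (hv : v ∈ Ioo (0 : ℝ) 1) : qf μ v ≤ x ↔ v ≤ cdf μ x :=
  ⟨fun h => (le_cdf_qf hv.2).trans (monotone_cdf μ h),
    fun h => csInf_le (bddBelow_setOf_le_cdf hv.1) h⟩

lemma monotoneOn_qf : MonotoneOn (qf μ) (Ioo 0 1) := fun _ hv₁ _ hv₂ h =>
  (qf_le_iff hv₁).2 (h.trans (le_cdf_qf hv₂.2))

lemma aemeasurable_qf : AEMeasurable (qf μ) (volume.restrict (Ioo 0 1)) :=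
  aemeasurable_restrict_of_monotoneOn measurableSet_Ioo monotoneOn_qf

lemma map_qf_volume_restrict_Ioo [IsProbabilityMeasure μ] :
    (volume.restrict (Ioo 0 1)).map (qf μ) = μ := by
  refine Measure.ext_of_Iic _ _ fun x => ?_
  have hpre : qf μ ⁻¹' Iic x ∩ Ioo 0 1 = Iic (cdf μ x) ∩ Ioo 0 1 := by
    ext v
    exact and_congr_left fun hv => qf_le_iff hv
  rw [Measure.map_apply_of_aemeasurable aemeasurable_qf measurableSet_Iic,
    Measure.restrict_apply' measurableSet_Ioo, hpre, ← ofReal_cdf]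
  refine le_antisymm ?_ ?_
  · calc volume (Iic (cdf μ x) ∩ Ioo 0 1) ≤ volume (Ioc 0 (cdf μ x)) :=
          measure_mono fun v hv => ⟨hv.2.1, hv.1⟩
      _ = _ := by rw [Real.volume_Ioc, sub_zero]
  · calc ENNReal.ofReal (cdf μ x) = volume (Ioo 0 (cdf μ x)) := by rw [Real.volume_Ioo, sub_zero]
      _ ≤ volume (Iic (cdf μ x) ∩ Ioo 0 1) := measure_mono fun v hv =>
        ⟨hv.2.le, hv.1, hv.2.trans_le (cdf_le_one μ x)⟩

lemma cdf_mem_Ico_of_mem_Ioo_qf {u w x : ℝ} (hu : u < 1) (hw : w ∈ Ioo (0 : ℝ) 1)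
    (hx : x ∈ Ioo (qf μ u) (qf μ w)) : cdf μ x ∈ Ico u w :=
  ⟨(le_cdf_qf hu).trans (monotone_cdf μ hx.1.le),
    lt_of_not_ge fun h => hx.2.not_ge ((qf_le_iff hw).2 h)⟩

variable [IsProbabilityMeasure μ] {φ : ℝ → ℝ≥0∞}

lemma setLIntegral_eq_setLIntegral_comp_qf (hφ : Measurable φ) {s : Set ℝ}
    (hs : MeasurableSet s) :
    ∫⁻ x in s, φ x ∂μ = ∫⁻ v in qf μ ⁻¹' s ∩ Ioo 0 1, φ (qf μ v) := by
  conv_lhs => rw [← map_qf_volume_restrict_Ioo (μ := μ)]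
  rw [Measure.restrict_map_of_aemeasurable aemeasurable_qf hs,
    lintegral_map' hφ.aemeasurable aemeasurable_qf.restrict,
    Measure.restrict_restrict' measurableSet_Ioo]

lemma setLIntegral_Ioo_le_setLIntegral_Ioc_comp_qf (hφ : Measurable φ) {u w : ℝ}
    (hu : u ∈ Ioo (0 : ℝ) 1) (hw : w ∈ Ioo (0 : ℝ) 1) :
    ∫⁻ x in Ioo (qf μ u) (qf μ w), φ x ∂μ ≤ ∫⁻ v in Ioc u w, φ (qf μ v) := by
  rw [setLIntegral_eq_setLIntegral_comp_qf hφ measurableSet_Ioo]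
  refine lintegral_mono_set fun v ⟨⟨hav, hvb⟩, hv⟩ => ⟨?_, ?_⟩
  · exact lt_of_not_ge fun hvu => hav.not_ge (monotoneOn_qf hv hu hvu)
  · exact le_of_not_gt fun hwv => hvb.not_ge (monotoneOn_qf hw hv hwv.le)

lemma setLIntegral_Ioc_comp_qf_le_setLIntegral_Icc (hφ : Measurable φ) {u w : ℝ}
    (hu : u ∈ Ioo (0 : ℝ) 1) (hw : w ∈ Ioo (0 : ℝ) 1) :
    ∫⁻ v in Ioc u w, φ (qf μ v) ≤ ∫⁻ x in Icc (qf μ u) (qf μ w), φ x ∂μ := by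
  rw [setLIntegral_eq_setLIntegral_comp_qf hφ measurableSet_Icc]
  refine lintegral_mono_set fun v hv => ?_
  have hv' : v ∈ Ioo (0 : ℝ) 1 := ⟨hu.1.trans hv.1, hv.2.trans_lt hw.2⟩
  exact ⟨⟨monotoneOn_qf hu hv' hv.1.le, monotoneOn_qf hv' hw hv.2⟩, hv'⟩

end Quantile

lemma _root_.ENNReal.ofReal_mul_ofReal_inv (r : ℝ) :
    ENNReal.ofReal r * ENNReal.ofReal r⁻¹ = if 0 < r then 1 else 0 := by
  split_ifs with h
  · rw [← ENNReal.ofReal_mul h.le, mul_inv_cancel₀ h.ne', ENNReal.ofReal_one]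
  · rw [ENNReal.ofReal_of_nonpos (not_lt.1 h), zero_mul]

section Density

variable {μ : Measure ℝ} {f : ℝ → ℝ} {A : Set ℝ}

lemma setLIntegral_indicator_inv_density (hf : Measurable f)
    (hdec : μ = μ.singularPart volume + volume.withDensity (fun x => ENNReal.ofReal (f x)))
    (hA : MeasurableSet A) (hsing : μ.singularPart volume A = 0) {s : Set ℝ}
    (hs : MeasurableSet s) :
    ∫⁻ x in s, A.indicator (fun x => ENNReal.ofReal (f x)⁻¹) x ∂μ
      = volume (s ∩ A ∩ {x | 0 < f x}) := by
  have hμ : μ.restrict (A ∩ s)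
      = (volume.withDensity fun x => ENNReal.ofReal (f x)).restrict (A ∩ s) := by
    conv_lhs => rw [hdec]
    rw [Measure.restrict_add,
      Measure.restrict_eq_zero.2 (measure_mono_null inter_subset_left hsing), zero_add]
  have hprod : ((fun x => ENNReal.ofReal (f x)) * fun x => ENNReal.ofReal (f x)⁻¹)
      = {x | 0 < f x}.indicator fun _ => 1 := by
    ext x
    simp [indicator_apply, ENNReal.ofReal_mul_ofReal_inv]
  rw [setLIntegral_indicator hA, hμ, setLIntegral_withDensity_eq_setLIntegral_mul _
    (g := fun x => ENNReal.ofReal (f x)⁻¹) hf.ennreal_ofReal hf.inv.ennreal_ofReal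
    (hA.inter hs), hprod,
    setLIntegral_indicator (measurableSet_lt measurable_const hf), setLIntegral_one,
    inter_comm, inter_comm A]

lemma ofReal_qf_sub_qf_le_volume (hAc : volume Aᶜ = 0)
    (hpos : ∀ᵐ x ∂(volume : Measure ℝ), (0 < cdf μ x ∧ cdf μ x < 1) → 0 < f x)
    {u w : ℝ} (hu : u ∈ Ioo (0 : ℝ) 1) (hw : w ∈ Ioo (0 : ℝ) 1) :
    ENNReal.ofReal (qf μ w - qf μ u) ≤ volume (Ioo (qf μ u) (qf μ w) ∩ A ∩ {x | 0 < f x}) := by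
  rw [← Real.volume_Ioo]
  refine measure_mono_ae ?_
  filter_upwards [hpos, mem_ae_iff.2 hAc] with x hxpos hxA hx
  have hcdf := cdf_mem_Ico_of_mem_Ioo_qf hu.2 hw hx
  exact ⟨⟨hx, hxA⟩, hxpos ⟨hu.1.trans_le hcdf.1, hcdf.2.trans hw.2⟩⟩

variable [IsProbabilityMeasure μ]

lemma setLIntegral_Ioc_indicator_inv_density_comp_qf (hf : Measurable f)
    (hdec : μ = μ.singularPart volume + volume.withDensity (fun x => ENNReal.ofReal (f x)))
    (hA : MeasurableSet A) (hsing : μ.singularPart volume A = 0) (hAc : volume Aᶜ = 0)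
    (hpos : ∀ᵐ x ∂(volume : Measure ℝ), (0 < cdf μ x ∧ cdf μ x < 1) → 0 < f x)
    {u w : ℝ} (hu : u ∈ Ioo (0 : ℝ) 1) (hw : w ∈ Ioo (0 : ℝ) 1) :
    ∫⁻ v in Ioc u w, A.indicator (fun x => ENNReal.ofReal (f x)⁻¹) (qf μ v)
      = ENNReal.ofReal (qf μ w - qf μ u) := by
  have hφ : Measurable (A.indicator fun x => ENNReal.ofReal (f x)⁻¹) :=
    hf.inv.ennreal_ofReal.indicator hA
  refine le_antisymm ?_ ?_
  · calc _ ≤ ∫⁻ x in Icc (qf μ u) (qf μ w),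
              A.indicator (fun x => ENNReal.ofReal (f x)⁻¹) x ∂μ :=
          setLIntegral_Ioc_comp_qf_le_setLIntegral_Icc hφ hu hw
      _ = volume (Icc (qf μ u) (qf μ w) ∩ A ∩ {x | 0 < f x}) :=
          setLIntegral_indicator_inv_density hf hdec hA hsing measurableSet_Icc
      _ ≤ volume (Icc (qf μ u) (qf μ w)) :=
          measure_mono (inter_subset_left.trans inter_subset_left)
      _ = _ := Real.volume_Icc
  · calc _ ≤ volume (Ioo (qf μ u) (qf μ w) ∩ A ∩ {x | 0 < f x}) :=
          ofReal_qf_sub_qf_le_volume hAc hpos hu hw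
      _ = ∫⁻ x in Ioo (qf μ u) (qf μ w),
              A.indicator (fun x => ENNReal.ofReal (f x)⁻¹) x ∂μ :=
          (setLIntegral_indicator_inv_density hf hdec hA hsing measurableSet_Ioo).symm
      _ ≤ _ := setLIntegral_Ioo_le_setLIntegral_Ioc_comp_qf hφ hu hw

lemma intervalIntegral_indicator_inv_density_comp_qf (hf0 : ∀ x, 0 ≤ f x) (hf : Measurable f)
    (hdec : μ = μ.singularPart volume + volume.withDensity (fun x => ENNReal.ofReal (f x)))
    (hA : MeasurableSet A) (hsing : μ.singularPart volume A = 0) (hAc : volume Aᶜ = 0)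
    (hpos : ∀ᵐ x ∂(volume : Measure ℝ), (0 < cdf μ x ∧ cdf μ x < 1) → 0 < f x)
    {u w : ℝ} (hu : u ∈ Ioo (0 : ℝ) 1) (hw : w ∈ Ioo (0 : ℝ) 1) (huw : u ≤ w) :
    ∫ v in u..w, A.indicator (fun y => (f y)⁻¹) (qf μ v) = qf μ w - qf μ u := by
  have hsub : Ioc u w ⊆ Ioo 0 1 := fun v hv => ⟨hu.1.trans hv.1, hv.2.trans_lt hw.2⟩
  have hmeas : AEStronglyMeasurable (fun v => A.indicator (fun y => (f y)⁻¹) (qf μ v))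
      (volume.restrict (Ioc u w)) :=
    ((hf.inv.indicator hA).comp_aemeasurable
      (aemeasurable_qf.mono_set hsub)).aestronglyMeasurable
  have hnonneg : ∀ y, 0 ≤ A.indicator (fun y => (f y)⁻¹) y :=
    indicator_nonneg fun y _ => inv_nonneg.2 (hf0 y)
  rw [intervalIntegral.integral_of_le huw,
    integral_eq_lintegral_of_nonneg_ae (ae_of_all _ fun v => hnonneg _) hmeas]
  have hofReal : ∀ y, ENNReal.ofReal (A.indicator (fun y => (f y)⁻¹) y)
      = A.indicator (fun y => ENNReal.ofReal (f y)⁻¹) y :=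
    fun y => (congr_fun (indicator_comp_of_zero ENNReal.ofReal_zero) y).symm
  simp only [hofReal]
  rw [setLIntegral_Ioc_indicator_inv_density_comp_qf hf hdec hA hsing hAc hpos hu hw,
    ENNReal.toReal_ofReal (sub_nonneg.2 (monotoneOn_qf hu hw huw))]

end Density

end ProbabilityTheory

theorem stmt9_general (μ : Measure ℝ) [IsProbabilityMeasure μ]
    (f : ℝ → ℝ) (hf0 : ∀ x, 0 ≤ f x) (hfmeas : Measurable f)
    (hdec : μ = μ.singularPart volume
      + volume.withDensity (fun x => ENNReal.ofReal (f x)))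
    (A : Set ℝ) (hA : MeasurableSet A) (hsing : μ.singularPart volume A = 0)
    (hAc : volume Aᶜ = 0)
    (hpos : ∀ᵐ x ∂(volume : Measure ℝ), (0 < cdf μ x ∧ cdf μ x < 1) → 0 < f x)
    (u w : ℝ) (hu : u ∈ Set.Ioo (0 : ℝ) 1) (hw : w ∈ Set.Ioo (0 : ℝ) 1) :
    qf μ w - qf μ u = ∫ v in u..w, Set.indicator A (fun y => (f y)⁻¹) (qf μ v) := by
  rcases le_total u w with huw | hwu
  · exact (intervalIntegral_indicator_inv_density_comp_qf hf0 hfmeas hdec hA hsing hAc hpos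
      hu hw huw).symm
  · rw [intervalIntegral.integral_symm, intervalIntegral_indicator_inv_density_comp_qf hf0 hfmeas
      hdec hA hsing hAc hpos hw hu hwu, neg_sub]

theorem stmt9 (μ : Measure ℝ) [IsProbabilityMeasure μ]
    (f : ℝ → ℝ) (hf0 : ∀ x, 0 ≤ f x) (hfmeas : Measurable f)
    (hdec : μ = μ.singularPart volume
      + volume.withDensity (fun x => ENNReal.ofReal (f x)))
    (A : Set ℝ) (hA : MeasurableSet A) (hsing : μ.singularPart volume A = 0)
    (hAc : volume Aᶜ = 0) (hfA : ∀ x ∉ A, f x = 1)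
    (hpos : ∀ᵐ x ∂(volume : Measure ℝ), (0 < cdf μ x ∧ cdf μ x < 1) → 0 < f x)
    (u w : ℝ) (hu : u ∈ Set.Ioo (0 : ℝ) 1) (hw : w ∈ Set.Ioo (0 : ℝ) 1) :
    qf μ w - qf μ u = ∫ v in u..w, Set.indicator A (fun y => (f y)⁻¹) (qf μ v) :=
  stmt9_general μ f hf0 hfmeas hdec A hA hsing hAc hpos u w hu hw
end

section
/- Let μ be a probability measure on ℝ with cdf F, ρ ≥ 1, α ∈ (0, 1/ρ). If limsup_{x→∞} x^{ρ/(1−αρ)}(F(−x)+1−F(x)) ∈ (0,∞), then for any sequence (y_N) of positive reals increasing to +∞ with limsup_N y_{N+1}/y_N < ∞, limsup_{N→∞} y_N^{αρ²/(1−αρ)} ∫_{y_N}^∞ y^{ρ−1}(F(−y)+1−F(y)) dy ∈ (0,∞). -/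
/-!
Write `G(x) = F(-x) + 1 - F(x)`, which is nonincreasing, `β = ρ/(1-αρ)` and
`e = β - ρ = αρ²/(1-αρ) > 0`. Integrating the tail bound `G(t) ≤ C t^{-β}` against `t^{ρ-1}`
gives `x^e ∫_x^∞ t^{ρ-1} G(t) dt ≤ C/e`. Conversely, monotonicity of `G` on `(x, 2x]` gives
`∫_x^∞ t^{ρ-1} G(t) dt ≥ x^ρ G(2x)`, so `x^e ∫_x^∞ t^{ρ-1} G ≥ 2^{-β} (2x)^β G(2x)`, which
exceeds `2^{-β} L/2` for arbitrarily large `x`, where `L > 0` is the limsup of `x^β G(x)`.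
To pass to the sequence `y_N`, bracket such an `x` as `y_N ≤ x < y_{N+1} ≤ R y_N`: the tail
integral is nonincreasing, so `y_N^e ∫_{y_N}^∞ ≥ R^{-e} x^e ∫_x^∞`.
-/

open MeasureTheory ProbabilityTheory Filter Set

lemma exists_le_lt_succ_of_tendsto_atTop {α : Type*} [LinearOrder α] [NoMaxOrder α]
    {y : ℕ → α} (hy : Tendsto y atTop atTop) {m : ℕ} {z : α} (hz : y m ≤ z) :
    ∃ N, m ≤ N ∧ y N ≤ z ∧ z < y (N + 1) := by
  by_contra! h
  have hle : ∀ N, m ≤ N → y N ≤ z := fun N hN => Nat.le_induction hz h N hN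
  obtain ⟨N, hN, hzN⟩ := ((eventually_ge_atTop m).and (hy.eventually_gt_atTop z)).exists
  exact (hle N hN).not_gt hzN

lemma exists_eventually_succ_le_mul_of_isBoundedUnder_div {y : ℕ → ℝ}
    (hy : Tendsto y atTop atTop)
    (hratio : IsBoundedUnder (· ≤ ·) atTop fun N => y (N + 1) / y N) :
    ∃ R > 0, ∀ᶠ N in atTop, y (N + 1) ≤ R * y N := by
  obtain ⟨R, hR⟩ := hratio
  refine ⟨max R 1, by positivity, ?_⟩
  filter_upwards [eventually_map.1 hR, hy.eventually_gt_atTop 0] with N hN hyN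
  rw [div_le_iff₀ hyN] at hN
  exact hN.trans (mul_le_mul_of_nonneg_right (le_max_left R 1) hyN.le)

lemma frequently_rpow_mul_le_of_succ_le_mul {T : ℝ → ℝ} (hT : AntitoneOn T (Ioi 0))
    (hT0 : ∀ x, 0 < x → 0 ≤ T x) {e c R : ℝ} (he : 0 ≤ e) (hR : 0 < R) {y : ℕ → ℝ}
    (hy : Tendsto y atTop atTop) (hratio : ∀ᶠ N in atTop, y (N + 1) ≤ R * y N)
    (hfreq : ∃ᶠ z in atTop, c ≤ z ^ e * T z) :
    ∃ᶠ N in atTop, R ^ (-e) * c ≤ y N ^ e * T (y N) := by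
  rw [frequently_atTop]
  intro m
  obtain ⟨m', hm'⟩ := eventually_atTop.1 (hratio.and (hy.eventually_gt_atTop 0))
  obtain ⟨z, hz, hcz⟩ := frequently_atTop.1 hfreq (y (max m m'))
  obtain ⟨N, hmN, hNz, hzN⟩ := exists_le_lt_succ_of_tendsto_atTop hy hz
  obtain ⟨hstep, hyN⟩ := hm' N ((le_max_right m m').trans hmN)
  have hz0 : 0 < z := hyN.trans_le hNz
  have hzR : z / R ≤ y N := by rw [div_le_iff₀ hR]; linarith
  refine ⟨N, (le_max_left m m').trans hmN, ?_⟩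
  calc R ^ (-e) * c ≤ R ^ (-e) * (z ^ e * T z) := by gcongr
    _ = (z / R) ^ e * T z := by rw [Real.div_rpow hz0.le hR.le, Real.rpow_neg hR.le]; ring
    _ ≤ y N ^ e * T z := by gcongr; exact hT0 z hz0
    _ ≤ y N ^ e * T (y N) := by gcongr; exact hT hyN hz0 hNz

lemma rpow_mul_le_mul_rpow_sub {s β C g t : ℝ} (ht : 0 < t) (h : t ^ β * g ≤ C) :
    t ^ s * g ≤ C * t ^ (s - β) :=
  calc t ^ s * g = t ^ (s - β) * (t ^ β * g) := by
        rw [← mul_assoc, ← Real.rpow_add ht, sub_add_cancel]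
    _ ≤ t ^ (s - β) * C := by gcongr
    _ = C * t ^ (s - β) := mul_comm _ _

noncomputable def tailMoment (s : ℝ) (G : ℝ → ℝ) (x : ℝ) : ℝ :=
  ∫ t in Ioi x, t ^ s * G t

section tailMoment

variable {G : ℝ → ℝ} {s : ℝ}

lemma tailMoment_nonneg (hG0 : ∀ t, 0 ≤ G t) {x : ℝ} (hx : 0 ≤ x) : 0 ≤ tailMoment s G x :=
  setIntegral_nonneg measurableSet_Ioi fun t ht =>
    mul_nonneg (Real.rpow_nonneg (hx.trans ht.le) _) (hG0 t)

lemma tailMoment_antitoneOn (hG0 : ∀ t, 0 ≤ G t)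
    (hint : ∀ a, 0 < a → IntegrableOn (fun t => t ^ s * G t) (Ioi a)) :
    AntitoneOn (tailMoment s G) (Ioi 0) := fun x hx _ _ hxz =>
  setIntegral_mono_set (hint x hx)
    (ae_restrict_of_forall_mem measurableSet_Ioi fun t ht =>
      mul_nonneg (Real.rpow_nonneg (hx.out.le.trans ht.le) _) (hG0 t))
    (Ioi_subset_Ioi hxz).eventuallyLE

lemma integrableOn_Ioi_rpow_mul (hG : Antitone G) (hG0 : ∀ t, 0 ≤ G t) {β C x₀ : ℝ}
    (hsβ : s + 1 < β) (hC : ∀ x, x₀ ≤ x → x ^ β * G x ≤ C) {a : ℝ} (ha : 0 < a) :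
    IntegrableOn (fun t => t ^ s * G t) (Ioi a) := by
  set b := max a x₀
  have hb : 0 < b := ha.trans_le (le_max_left a x₀)
  have hnear : IntegrableOn (fun t => t ^ s * G t) (Ioc a b) :=
    (IntegrableOn.continuousOn_mul
      (continuousOn_id.rpow_const fun t ht => Or.inl (ha.trans_le ht.1).ne')
      (hG.locallyIntegrable.integrableOn_isCompact isCompact_Icc) isCompact_Icc).mono_set
      Ioc_subset_Icc_self
  have hfar : IntegrableOn (fun t => t ^ s * G t) (Ioi b) := by
    refine ((integrableOn_Ioi_rpow_of_lt (a := s - β) (by linarith) hb).const_mul C).mono'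
      ((measurable_id.pow_const s).aestronglyMeasurable.mul
        hG.measurable.aestronglyMeasurable) ?_
    filter_upwards [ae_restrict_mem measurableSet_Ioi] with t ht
    have ht0 : 0 < t := hb.trans ht
    rw [Real.norm_of_nonneg (mul_nonneg (Real.rpow_nonneg ht0.le _) (hG0 t))]
    exact rpow_mul_le_mul_rpow_sub ht0 (hC t ((le_max_right a x₀).trans ht.le))
  rw [← Ioc_union_Ioi_eq_Ioi (le_max_left a x₀)]
  exact hnear.union hfar

lemma rpow_mul_tailMoment_le (hG : Antitone G) (hG0 : ∀ t, 0 ≤ G t) {β C x₀ : ℝ}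
    (hsβ : s + 1 < β) (hx₀ : 0 < x₀) (hC : ∀ x, x₀ ≤ x → x ^ β * G x ≤ C) {x : ℝ}
    (hx : x₀ ≤ x) : x ^ (β - s - 1) * tailMoment s G x ≤ C / (β - s - 1) := by
  have hx0 : 0 < x := hx₀.trans_le hx
  have hle : tailMoment s G x ≤ ∫ t in Ioi x, C * t ^ (s - β) :=
    setIntegral_mono_on (integrableOn_Ioi_rpow_mul hG hG0 hsβ hC hx0)
      ((integrableOn_Ioi_rpow_of_lt (by linarith) hx0).const_mul C) measurableSet_Ioi
      fun t ht => rpow_mul_le_mul_rpow_sub (hx0.trans ht) (hC t (hx.trans ht.le))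
  have hval : ∫ t in Ioi x, C * t ^ (s - β) = C / (β - s - 1) * x ^ (-(β - s - 1)) := by
    rw [integral_const_mul, integral_Ioi_rpow_of_lt (by linarith) hx0,
      show s - β + 1 = -(β - s - 1) by ring, neg_div_neg_eq]
    ring
  calc x ^ (β - s - 1) * tailMoment s G x
      ≤ x ^ (β - s - 1) * (C / (β - s - 1) * x ^ (-(β - s - 1))) := by
        rw [← hval]; gcongr
    _ = C / (β - s - 1) := by
        rw [mul_left_comm, ← Real.rpow_add hx0, add_neg_cancel, Real.rpow_zero, mul_one]

lemma rpow_mul_le_tailMoment (hG : Antitone G) (hG0 : ∀ t, 0 ≤ G t) (hs : 0 ≤ s) {z : ℝ}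
    (hz : 0 < z) (hint : IntegrableOn (fun t => t ^ s * G t) (Ioi z)) :
    z ^ (s + 1) * G (2 * z) ≤ tailMoment s G z :=
  calc z ^ (s + 1) * G (2 * z) = ∫ _ in Ioc z (2 * z), z ^ s * G (2 * z) := by
        rw [setIntegral_const, Real.volume_real_Ioc, smul_eq_mul, Real.rpow_add_one hz.ne',
          max_eq_left (by linarith), show 2 * z - z = z by ring]
        ring
    _ ≤ ∫ t in Ioc z (2 * z), t ^ s * G t :=
        setIntegral_mono_on (integrableOn_const measure_Ioc_lt_top.ne)
          (hint.mono_set Ioc_subset_Ioi_self) measurableSet_Ioc fun t ht =>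
          mul_le_mul (Real.rpow_le_rpow hz.le ht.1.le hs) (hG ht.2) (hG0 _)
            (Real.rpow_nonneg (hz.trans ht.1).le _)
    _ ≤ tailMoment s G z :=
        setIntegral_mono_set hint
          (ae_restrict_of_forall_mem measurableSet_Ioi fun t ht =>
            mul_nonneg (Real.rpow_nonneg (hz.trans ht).le _) (hG0 t))
          Ioc_subset_Ioi_self.eventuallyLE

lemma frequently_le_rpow_mul_tailMoment (hG : Antitone G) (hG0 : ∀ t, 0 ≤ G t) (hs : 0 ≤ s)
    {β c : ℝ} (hint : ∀ a, 0 < a → IntegrableOn (fun t => t ^ s * G t) (Ioi a))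
    (hfreq : ∃ᶠ x in atTop, c ≤ x ^ β * G x) :
    ∃ᶠ z in atTop, 2 ^ (-β) * c ≤ z ^ (β - s - 1) * tailMoment s G z := by
  refine (tendsto_id.atTop_div_const two_pos).frequently
    (hfreq.mp ((eventually_gt_atTop 0).mono fun x hx hcx => ?_))
  have hz : 0 < x / 2 := by positivity
  calc 2 ^ (-β) * c ≤ 2 ^ (-β) * (x ^ β * G x) := by gcongr
    _ = (x / 2) ^ (β - s - 1) * ((x / 2) ^ (s + 1) * G (2 * (x / 2))) := by
        rw [mul_div_cancel₀ x two_ne_zero, ← mul_assoc (_ ^ (β - s - 1)), ← Real.rpow_add hz,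
          show β - s - 1 + (s + 1) = β by ring, Real.div_rpow hx.le zero_le_two,
          Real.rpow_neg zero_le_two]
        ring
    _ ≤ (x / 2) ^ (β - s - 1) * tailMoment s G (x / 2) := by
        gcongr; exact rpow_mul_le_tailMoment hG hG0 hs hz (hint _ hz)

theorem limsup_rpow_mul_tailMoment_pos_and_isBoundedUnder (hG : Antitone G)
    (hG0 : ∀ t, 0 ≤ G t) (hs : 0 ≤ s) {β : ℝ} (hsβ : s + 1 < β)
    (hbdd : IsBoundedUnder (· ≤ ·) atTop fun x => x ^ β * G x)
    (hpos : 0 < limsup (fun x => x ^ β * G x) atTop) {y : ℕ → ℝ}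
    (hy : Tendsto y atTop atTop)
    (hratio : IsBoundedUnder (· ≤ ·) atTop fun N => y (N + 1) / y N) :
    0 < limsup (fun N => y N ^ (β - s - 1) * tailMoment s G (y N)) atTop ∧
      IsBoundedUnder (· ≤ ·) atTop fun N => y N ^ (β - s - 1) * tailMoment s G (y N) := by
  obtain ⟨C, x₀, hx₀, hC⟩ : ∃ C x₀, 0 < x₀ ∧ ∀ x, x₀ ≤ x → x ^ β * G x ≤ C := by
    obtain ⟨C, hC⟩ := hbdd
    obtain ⟨x₀, hx₀⟩ := eventually_atTop.1 (eventually_map.1 hC)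
    exact ⟨C, max x₀ 1, by positivity, fun x hx => hx₀ x (le_of_max_le_left hx)⟩
  have hint a (ha : 0 < a) := integrableOn_Ioi_rpow_mul hG hG0 hsβ hC ha
  have hbddN : IsBoundedUnder (· ≤ ·) atTop
      fun N => y N ^ (β - s - 1) * tailMoment s G (y N) :=
    ⟨C / (β - s - 1), eventually_map.2 <| (hy.eventually_ge_atTop x₀).mono fun _ hN =>
      rpow_mul_tailMoment_le hG hG0 hsβ hx₀ hC hN⟩
  refine ⟨?_, hbddN⟩
  have hcobdd : IsCoboundedUnder (· ≤ ·) atTop fun x => x ^ β * G x :=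
    isCoboundedUnder_le_of_eventually_le atTop
      ((eventually_ge_atTop 0).mono fun x hx => mul_nonneg (Real.rpow_nonneg hx _) (hG0 x))
  have hfreq : ∃ᶠ x in atTop, limsup (fun x => x ^ β * G x) atTop / 2 ≤ x ^ β * G x :=
    (frequently_lt_of_lt_limsup hcobdd (half_lt_self hpos)).mono fun _ h => h.le
  obtain ⟨R, hR, hstep⟩ := exists_eventually_succ_le_mul_of_isBoundedUnder_div hy hratio
  have hfreqN := frequently_rpow_mul_le_of_succ_le_mul (tailMoment_antitoneOn hG0 hint)
    (fun x hx => tailMoment_nonneg hG0 hx.le) (by linarith) hR hy hstep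
    (frequently_le_rpow_mul_tailMoment hG hG0 hs hint hfreq)
  exact (by positivity : (0 : ℝ) < _).trans_le (le_limsup_of_frequently_le hfreqN hbddN)

end tailMoment

noncomputable def twoSidedTail (μ : Measure ℝ) (x : ℝ) : ℝ :=
  cdf μ (-x) + 1 - cdf μ x

lemma twoSidedTail_nonneg (μ : Measure ℝ) (x : ℝ) : 0 ≤ twoSidedTail μ x := by
  unfold twoSidedTail
  linarith [cdf_nonneg μ (-x), cdf_le_one μ x]

lemma antitone_twoSidedTail (μ : Measure ℝ) : Antitone (twoSidedTail μ) := fun s t hst => by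
  unfold twoSidedTail
  linarith [monotone_cdf μ hst, monotone_cdf μ (neg_le_neg hst)]

theorem stmt13_general (μ : Measure ℝ) (ρ α : ℝ) (hρ : 1 ≤ ρ)
    (hα : 0 < α) (hαρ : α < 1 / ρ)
    (hbdd : IsBoundedUnder (· ≤ ·) atTop
      (fun x : ℝ => x ^ (ρ / (1 - α * ρ)) * (cdf μ (-x) + 1 - cdf μ x)))
    (hpos : 0 < Filter.limsup
      (fun x : ℝ => x ^ (ρ / (1 - α * ρ)) * (cdf μ (-x) + 1 - cdf μ x)) Filter.atTop)
    (y : ℕ → ℝ)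
    (hytop : Tendsto y atTop atTop)
    (hyratio : IsBoundedUnder (· ≤ ·) atTop (fun N => y (N + 1) / y N)) :
    0 < Filter.limsup
        (fun N : ℕ => (y N) ^ (α * ρ ^ 2 / (1 - α * ρ)) *
          ∫ t in Set.Ioi (y N), t ^ (ρ - 1) * (cdf μ (-t) + 1 - cdf μ t)) Filter.atTop ∧
      IsBoundedUnder (· ≤ ·) atTop
        (fun N : ℕ => (y N) ^ (α * ρ ^ 2 / (1 - α * ρ)) *
          ∫ t in Set.Ioi (y N), t ^ (ρ - 1) * (cdf μ (-t) + 1 - cdf μ t)) := by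
  have hρ0 : 0 < ρ := by linarith
  have hαρ' : 0 < 1 - α * ρ := by
    rw [lt_div_iff₀ hρ0] at hαρ
    linarith
  have hexp : α * ρ ^ 2 / (1 - α * ρ) = ρ / (1 - α * ρ) - (ρ - 1) - 1 := by
    field_simp
    ring
  have hβ : ρ - 1 + 1 < ρ / (1 - α * ρ) := by
    rw [sub_add_cancel, lt_div_iff₀ hαρ']
    nlinarith [mul_pos hα hρ0]
  rw [hexp]
  exact limsup_rpow_mul_tailMoment_pos_and_isBoundedUnder (antitone_twoSidedTail μ)
    (twoSidedTail_nonneg μ) (by linarith) hβ hbdd hpos hytop hyratio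

theorem stmt13 (μ : Measure ℝ) [IsProbabilityMeasure μ] (ρ α : ℝ) (hρ : 1 ≤ ρ)
    (hα : 0 < α) (hαρ : α < 1 / ρ)
    (hbdd : IsBoundedUnder (· ≤ ·) atTop
      (fun x : ℝ => x ^ (ρ / (1 - α * ρ)) * (cdf μ (-x) + 1 - cdf μ x)))
    (hpos : 0 < Filter.limsup
      (fun x : ℝ => x ^ (ρ / (1 - α * ρ)) * (cdf μ (-x) + 1 - cdf μ x)) Filter.atTop)
    (y : ℕ → ℝ) (hy0 : ∀ N, 0 < y N) (hymono : Monotone y)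
    (hytop : Tendsto y atTop atTop)
    (hyratio : IsBoundedUnder (· ≤ ·) atTop (fun N => y (N + 1) / y N)) :
    0 < Filter.limsup
        (fun N : ℕ => (y N) ^ (α * ρ ^ 2 / (1 - α * ρ)) *
          ∫ t in Set.Ioi (y N), t ^ (ρ - 1) * (cdf μ (-t) + 1 - cdf μ t)) Filter.atTop ∧
      IsBoundedUnder (· ≤ ·) atTop
        (fun N : ℕ => (y N) ^ (α * ρ ^ 2 / (1 - α * ρ)) *
          ∫ t in Set.Ioi (y N), t ^ (ρ - 1) * (cdf μ (-t) + 1 - cdf μ t)) :=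
  stmt13_general μ ρ α hρ hα hαρ hbdd hpos y hytop hyratio
end

section
/- For ℓ an integer ≥ 2 and d ≥ 2, there exists a positive integer N ≤ ℓ^d such that for every k ∈ {1,…,d}, the distance from N·ℓ^{−k} to the nearest integer is at least (ℓ−1)/(2ℓ). -/
/-!
Build `N` one base-`l` digit at a time, from the least significant one. The fractional part of
`N / l ^ k` only depends on the last `k` digits, so it is not changed by later digits. When the
digit of weight `l ^ d` is chosen, `N / l ^ (d + 1)` becomes `(x + a) / l` with `x = N / l ^ d`
already fixed and `a` free in `ℤ`; since `[(l - 1) / 2, (l + 1) / 2]` has length `1`, some `a` puts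
it into `[(l - 1) / (2 l), (l + 1) / (2 l)]`, and a real whose fractional part lies there is at
distance at least `(l - 1) / (2 l)` from `ℤ`.
-/

lemma le_iInf_abs_sub_intCast {c y : ℝ} (h : Int.fract y ∈ Set.Icc c (1 - c)) :
    c ≤ ⨅ j : ℤ, |y - j| := by
  refine le_ciInf fun j => ?_
  rw [← Int.self_sub_floor] at h
  rcases le_or_gt j ⌊y⌋ with hj | hj
  · have : (j : ℝ) ≤ ⌊y⌋ := by exact_mod_cast hj
    exact le_abs.2 (Or.inl (by linarith [h.1]))
  · have : (⌊y⌋ : ℝ) + 1 ≤ j := by exact_mod_cast hj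
    exact le_abs.2 (Or.inr (by linarith [h.2]))

lemma exists_intCast_add_div_mem_Ico (x : ℝ) {l : ℝ} (hl : 0 < l) :
    ∃ a : ℤ, (x + a) / l ∈ Set.Ico ((l - 1) / (2 * l)) ((l + 1) / (2 * l)) := by
  refine ⟨⌈(l - 1) / 2 - x⌉, ?_, ?_⟩
  · rw [div_le_div_iff₀ (by positivity) hl]
    nlinarith [Int.le_ceil ((l - 1) / 2 - x)]
  · rw [div_lt_div_iff₀ hl (by positivity)]
    nlinarith [Int.ceil_lt_add_one ((l - 1) / 2 - x)]

section

variable {l : ℕ}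

lemma fract_add_mul_pow_div_pow (hl : l ≠ 0) (N m : ℤ) {k d : ℕ} (hkd : k ≤ d) :
    Int.fract (((N + m * l ^ d : ℤ) : ℝ) / l ^ k) = Int.fract ((N : ℝ) / l ^ k) := by
  have hl' : (l : ℝ) ≠ 0 := by exact_mod_cast hl
  have : ((N + m * l ^ d : ℤ) : ℝ) / l ^ k = N / l ^ k + ((m * l ^ (d - k) : ℤ) : ℝ) := by
    have hsplit : (l : ℝ) ^ d = l ^ (d - k) * l ^ k := by rw [← pow_add, Nat.sub_add_cancel hkd]
    push_cast
    rw [hsplit]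
    field_simp
  rw [this, Int.fract_add_intCast]

lemma exists_int_forall_fract_div_pow_mem_Icc (hl : 1 ≤ l) (d : ℕ) :
    ∃ N : ℤ, (N : ℝ) / l ^ d ∈ Set.Ico 0 1 ∧ ∀ k, 1 ≤ k → k ≤ d →
      Int.fract ((N : ℝ) / l ^ k) ∈ Set.Icc (((l : ℝ) - 1) / (2 * l)) ((l + 1) / (2 * l)) := by
  have hl₀ : (0 : ℝ) < l := by exact_mod_cast hl
  have hl₁ : (1 : ℝ) ≤ l := by exact_mod_cast hl
  induction d with
  | zero => exact ⟨0, by simp, fun k hk hk0 => by omega⟩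
  | succ d ih =>
    obtain ⟨N, -, hN⟩ := ih
    obtain ⟨a, ha⟩ := exists_intCast_add_div_mem_Ico ((N : ℝ) / l ^ d) hl₀
    have hnew : ((N + a * l ^ d : ℤ) : ℝ) / l ^ (d + 1) = ((N : ℝ) / l ^ d + a) / l := by
      push_cast
      field_simp
      ring
    have hunit : ((N + a * l ^ d : ℤ) : ℝ) / l ^ (d + 1) ∈ Set.Ico 0 1 := by
      rw [hnew]
      refine ⟨le_trans (by positivity) ha.1, ha.2.trans_le ?_⟩
      rw [div_le_one (by positivity)]
      linarith
    refine ⟨N + a * l ^ d, hunit, fun k hk hkd => ?_⟩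
    rcases Nat.le_succ_iff.1 hkd with hkd | rfl
    · rw [fract_add_mul_pow_div_pow (Nat.one_le_iff_ne_zero.1 hl) N a hkd]
      exact hN k hk hkd
    · rw [Int.fract_eq_self.2 hunit, hnew]
      exact Set.Ico_subset_Icc_self ha

lemma exists_nat_pos_le_pow_forall_fract_div_pow_mem_Icc (hl : 2 ≤ l) {d : ℕ} (hd : 1 ≤ d) :
    ∃ N : ℕ, 0 < N ∧ N ≤ l ^ d ∧ ∀ k, 1 ≤ k → k ≤ d →
      Int.fract ((N : ℝ) / l ^ k) ∈ Set.Icc (((l : ℝ) - 1) / (2 * l)) ((l + 1) / (2 * l)) := by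
  obtain ⟨N, hunit, hN⟩ := exists_int_forall_fract_div_pow_mem_Icc (l := l) (by omega) d
  have hl₂ : (2 : ℝ) ≤ l := by exact_mod_cast hl
  have hpow : (0 : ℝ) < (l : ℝ) ^ d := by positivity
  have hNd := hN d hd le_rfl
  rw [Int.fract_eq_self.2 hunit] at hNd
  have hpos : (0 : ℝ) < N := by
    have : (0 : ℝ) < ((l : ℝ) - 1) / (2 * l) := by apply div_pos <;> linarith
    exact (div_pos_iff_of_pos_right hpow).1 (this.trans_le hNd.1)
  have hle : (N : ℝ) ≤ l ^ d := (div_le_one hpow).1 hunit.2.le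
  lift N to ℕ using (Int.cast_pos.1 hpos).le
  refine ⟨N, by exact_mod_cast hpos, by exact_mod_cast hle, fun k hk hkd => ?_⟩
  simpa only [Int.cast_natCast] using hN k hk hkd

end

theorem stmt17 (l d : ℕ) (hl : 2 ≤ l) (hd : 2 ≤ d) :
    ∃ N : ℕ, 0 < N ∧ N ≤ l ^ d ∧ ∀ k : ℕ, 1 ≤ k → k ≤ d →
      ((l : ℝ) - 1) / (2 * l) ≤ ⨅ j : ℤ, |(N : ℝ) * (l : ℝ) ^ (-(k : ℤ)) - (j : ℝ)| := by
  obtain ⟨N, hN₀, hNd, hN⟩ := exists_nat_pos_le_pow_forall_fract_div_pow_mem_Icc hl (by omega : 1 ≤ d)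
  refine ⟨N, hN₀, hNd, fun k hk hkd => ?_⟩
  have hcompl : ((l : ℝ) + 1) / (2 * l) = 1 - ((l : ℝ) - 1) / (2 * l) := by
    field_simp
    ring
  rw [zpow_neg, zpow_natCast, ← div_eq_mul_inv]
  exact le_iInf_abs_sub_intCast (hcompl ▸ hN k hk hkd)
end
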